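/- arXiv:1111.1915 — 4 statements merged into one kernel-verified Lean document; each statement's English description precedes it below -/
import Mathlib

section
/- Let H = H₀ ⊕ H₁₁ ⊕ H₁₂ be an orthogonal decomposition of a Hilbert space, let F₁,...,Fₙ be continuous linear functionals whose representers all lie in H₀ ⊕ H₁₁, and let G : ℝⁿ → ℝ be arbitrary and λ ≥ 0. For any μ = μ₀ + μ₁₁ + μ₁₂ with components in the respective subspaces, the objective J(μ) = G(F₁(μ),...,Fₙ(μ)) + λ(‖μ₁₁‖² + ‖μ₁₂‖²) satisfies J(μ₀ + μ₁₁) ≤ J(μ). Hence any minimizer of J over H can be taken with μ₁₂ = 0. -/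
open scoped RealInnerProductSpace

theorem minimizer_drops_orthogonal_component_general
    {H : Type*} [NormedAddCommGroup H] [InnerProductSpace ℝ H]
    (H₀ H₁₁ H₁₂ : Submodule ℝ H)
    (horth₀₂ : ∀ x ∈ H₀, ∀ y ∈ H₁₂, ⟪x, y⟫ = 0)
    (horth₁₂ : ∀ x ∈ H₁₁, ∀ y ∈ H₁₂, ⟪x, y⟫ = 0)
    (n : ℕ) (F : Fin n → H →L[ℝ] ℝ) (η : Fin n → H)
    (hrep : ∀ (j : Fin n) (f : H), ⟪η j, f⟫ = F j f)
    (hη : ∀ j : Fin n, η j ∈ H₀ ⊔ H₁₁)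
    (G : (Fin n → ℝ) → ℝ) (lam : ℝ) (hlam : 0 ≤ lam)
    (μ₀ μ₁₁ μ₁₂ : H) (h₁₂ : μ₁₂ ∈ H₁₂) :
    G (fun j => F j (μ₀ + μ₁₁)) + lam * ‖μ₁₁‖ ^ 2 ≤
      G (fun j => F j (μ₀ + μ₁₁ + μ₁₂)) + lam * (‖μ₁₁‖ ^ 2 + ‖μ₁₂‖ ^ 2) := by
  have hμ₁₂ : μ₁₂ ∈ (H₀ ⊔ H₁₁)ᗮ := by
    rw [← Submodule.inf_orthogonal]
    exact ⟨fun u hu => horth₀₂ u hu μ₁₂ h₁₂, fun u hu => horth₁₂ u hu μ₁₂ h₁₂⟩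
  have hF : ∀ j, F j μ₁₂ = 0 := fun j =>
    hrep j μ₁₂ ▸ Submodule.inner_right_of_mem_orthogonal (hη j) hμ₁₂
  have hdata : (fun j => F j (μ₀ + μ₁₁ + μ₁₂)) = fun j => F j (μ₀ + μ₁₁) := by
    funext j
    rw [map_add, hF, add_zero]
  have hpenalty : 0 ≤ lam * ‖μ₁₂‖ ^ 2 := mul_nonneg hlam (sq_nonneg _)
  rw [hdata, mul_add]
  linarith

/-- If `H = H₀ ⊕ H₁₁ ⊕ H₁₂` (pairwise orthogonal subspaces), the representers of the
continuous linear functionals `F j` all lie in `H₀ ⊔ H₁₁`, `λ ≥ 0`, and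
`μ = μ₀ + μ₁₁ + μ₁₂` with components in the respective subspaces, then the objective
`J(μ) = G (F₁ μ, ..., Fₙ μ) + λ (‖μ₁₁‖² + ‖μ₁₂‖²)` satisfies `J(μ₀ + μ₁₁) ≤ J(μ)`;
hence any minimizer can be taken with `μ₁₂ = 0`. -/
theorem minimizer_drops_orthogonal_component
    {H : Type*} [NormedAddCommGroup H] [InnerProductSpace ℝ H] [CompleteSpace H]
    (H₀ H₁₁ H₁₂ : Submodule ℝ H)
    (horth₀₁ : ∀ x ∈ H₀, ∀ y ∈ H₁₁, ⟪x, y⟫ = 0)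
    (horth₀₂ : ∀ x ∈ H₀, ∀ y ∈ H₁₂, ⟪x, y⟫ = 0)
    (horth₁₂ : ∀ x ∈ H₁₁, ∀ y ∈ H₁₂, ⟪x, y⟫ = 0)
    (n : ℕ) (F : Fin n → H →L[ℝ] ℝ) (η : Fin n → H)
    (hrep : ∀ (j : Fin n) (f : H), ⟪η j, f⟫ = F j f)
    (hη : ∀ j : Fin n, η j ∈ H₀ ⊔ H₁₁)
    (G : (Fin n → ℝ) → ℝ) (lam : ℝ) (hlam : 0 ≤ lam)
    (μ₀ μ₁₁ μ₁₂ : H) (h₀ : μ₀ ∈ H₀) (h₁₁ : μ₁₁ ∈ H₁₁) (h₁₂ : μ₁₂ ∈ H₁₂) :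
    G (fun j => F j (μ₀ + μ₁₁)) + lam * ‖μ₁₁‖ ^ 2 ≤
      G (fun j => F j (μ₀ + μ₁₁ + μ₁₂)) + lam * (‖μ₁₁‖ ^ 2 + ‖μ₁₂‖ ^ 2) :=
  minimizer_drops_orthogonal_component_general H₀ H₁₁ H₁₂ horth₀₂ horth₁₂ n F η hrep hη G lam hlam
    μ₀ μ₁₁ μ₁₂ h₁₂
end

section
/- The bilinear form ⟨f,g⟩ = ∑_{j=0}^{m−1} f^{(j)}(a) g^{(j)}(a) + ∫_a^b (Lf)(t)(Lg)(t) dt is an inner product on H^m[a,b], where L is an m-th order linear differential operator with continuous coefficients; in particular ⟨f,f⟩ = 0 implies f ≡ 0. -/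
open MeasureTheory Set
open scoped Interval

/-! If `⟨f, f⟩ = 0`, the initial values `f⁽ʲ⁾(a)` vanish and `Lf = 0` almost everywhere.
As `f⁽ᵐ⁻¹⁾` is a primitive of `f⁽ᵐ⁾`, which agrees a.e. with the continuous function
`-∑ wⱼ f⁽ʲ⁾`, the equation `Lf = 0` in fact holds at every point of `[a, b]`. Then
`(f, f', …, f⁽ᵐ⁻¹⁾)` solves a first-order linear system with bounded coefficients and zero
initial value, and Grönwall's inequality forces it to vanish. -/

theorem eqOn_Icc_of_hasDerivWithinAt_of_ae_eq {E : Type*} [NormedAddCommGroup E]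
    [NormedSpace ℝ E] [CompleteSpace E] {F F' p : ℝ → E} {a b : ℝ} (hab : a < b)
    (hF : ∀ t ∈ Icc a b, HasDerivWithinAt F (F' t) (Icc a b) t)
    (hp : ContinuousOn p (Icc a b)) (hae : F' =ᵐ[volume.restrict (Ioc a b)] p) :
    EqOn F' p (Icc a b) := by
  have hF_eq : ∀ x ∈ Icc a b, F x = F a + ∫ s in a..x, p s := by
    intro x hx
    have hsub : Icc a x ⊆ Icc a b := Icc_subset_Icc_right hx.2
    have hae_x : F' =ᵐ[volume.restrict (Ι a x)] p := by
      rw [uIoc_of_le hx.1]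
      exact ae_restrict_of_ae_restrict_of_subset (Ioc_subset_Ioc_right hx.2) hae
    have hF'i : IntervalIntegrable F' volume a x :=
      ((hp.mono hsub).intervalIntegrable_of_Icc hx.1).congr_ae hae_x.symm
    rw [← intervalIntegral.integral_congr_ae_restrict hae_x,
      intervalIntegral.integral_eq_sub_of_hasDerivAt_of_le hx.1
        (fun y hy => (hF y (hsub hy)).continuousWithinAt.mono hsub)
        (fun y hy => (hF y (hsub (Ioo_subset_Icc_self hy))).hasDerivAt
          (Icc_mem_nhds hy.1 (hy.2.trans_le hx.2))) hF'i]
    abel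
  -- `F` is also a primitive of `p`, so both `F' t` and `p t` are its derivative within `[a, b]`.
  intro t ht
  have : Fact (t ∈ Icc a b) := ⟨ht⟩
  have hP : HasDerivWithinAt (fun x => F a + ∫ s in a..x, p s) (p t) (Icc a b) t :=
    (intervalIntegral.integral_hasDerivWithinAt_right
      ((hp.mono (Icc_subset_Icc_right ht.2)).intervalIntegrable_of_Icc ht.1)
      (hp.stronglyMeasurableAtFilter_nhdsWithin measurableSet_Icc t) (hp t ht)).const_add _
  exact (uniqueDiffOn_Icc hab t ht).eq_deriv _ (hF t ht) (hP.congr hF_eq (hF_eq t ht))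

theorem eq_zero_of_linearODE_of_initial_eq_zero {m : ℕ} {a b W : ℝ} {g w : ℕ → ℝ → ℝ}
    (hW : ∀ t ∈ Icc a b, ∑ j ∈ Finset.range m, |w j t| ≤ W)
    (hg : ∀ j < m, ∀ t ∈ Icc a b, HasDerivWithinAt (g j) (g (j + 1) t) (Icc a b) t)
    (hL : ∀ t ∈ Icc a b, g m t + ∑ j ∈ Finset.range m, w j t * g j t = 0)
    (ha : ∀ j < m, g j a = 0) :
    ∀ j < m, ∀ t ∈ Icc a b, g j t = 0 := by
  set Y : ℝ → Fin m → ℝ := fun t i => g i t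
  have hgY : ∀ j < m, ∀ t, |g j t| ≤ ‖Y t‖ := fun j hj t => norm_le_pi_norm (Y t) ⟨j, hj⟩
  have hY : ContinuousOn Y (Icc a b) :=
    continuousOn_pi.2 fun i t ht => (hg i i.2 t ht).continuousWithinAt
  have hY' : ∀ t ∈ Ico a b, HasDerivWithinAt Y (fun i => g (i + 1) t) (Ici t) t :=
    fun t ht => hasDerivWithinAt_pi.2 fun i =>
      (hg i i.2 t (Ico_subset_Icc_self ht)).mono_of_mem_nhdsWithin (Icc_mem_nhdsGE_of_mem ht)
  have hK : (1 : ℝ) ≤ max 1 W := le_max_left _ _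
  have hbound : ∀ t ∈ Ico a b, ‖(fun i : Fin m => g (i + 1) t)‖ ≤ max 1 W * ‖Y t‖ := by
    intro t ht
    refine (pi_norm_le_iff_of_nonneg (by positivity)).2 fun i => ?_
    rw [Real.norm_eq_abs]
    rcases (show (i : ℕ) + 1 ≤ m from i.2).lt_or_eq with hi | hi
    · exact (hgY _ hi t).trans (le_mul_of_one_le_left (norm_nonneg _) hK)
    · rw [hi, eq_neg_of_add_eq_zero_left (hL t (Ico_subset_Icc_self ht)), abs_neg]
      calc |∑ j ∈ Finset.range m, w j t * g j t|
          ≤ ∑ j ∈ Finset.range m, |w j t| * ‖Y t‖ :=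
            (Finset.abs_sum_le_sum_abs _ _).trans <| Finset.sum_le_sum fun j hj => by
              rw [abs_mul]
              exact mul_le_mul_of_nonneg_left (hgY j (Finset.mem_range.1 hj) t) (abs_nonneg _)
        _ = (∑ j ∈ Finset.range m, |w j t|) * ‖Y t‖ := (Finset.sum_mul ..).symm
        _ ≤ max 1 W * ‖Y t‖ :=
            mul_le_mul_of_nonneg_right ((hW t (Ico_subset_Icc_self ht)).trans (le_max_right _ _))
              (norm_nonneg _)
  have hY0 := eq_zero_of_abs_deriv_le_mul_abs_self_of_eq_zero_right hY hY'
    (funext fun i => ha i i.2) hbound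
  exact fun j hj t ht => congrFun (hY0 t ht) ⟨j, hj⟩

/-- The bilinear form `⟨f,g⟩ = ∑_{j<m} f^{(j)}(a) g^{(j)}(a) + ∫_a^b (Lf)(Lg)` is an
inner product on `H^m[a,b]`, where `(Lf)(t) = f^{(m)}(t) + ∑_{j<m} w j t * f^{(j)}(t)`
with continuous coefficients: `⟨f,f⟩ ≥ 0`, and `⟨f,f⟩ = 0` implies `f ≡ 0` on `[a,b]`. -/
theorem differential_operator_inner_product_positive_definite
    {a b : ℝ} (hab : a < b)
    (m : ℕ) (hm : 0 < m) (f : ℝ → ℝ) (w : ℕ → ℝ → ℝ)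
    (hw : ∀ j < m, ContinuousOn (w j) (Set.Icc a b))
    (hsmooth : ∀ j < m, ∀ t ∈ Set.Icc a b,
      HasDerivWithinAt (iteratedDeriv j f) (iteratedDeriv (j + 1) f t) (Set.Icc a b) t)
    (hint : IntervalIntegrable
      (fun t => (iteratedDeriv m f t + ∑ j ∈ Finset.range m, w j t * iteratedDeriv j f t) ^ 2)
      volume a b) :
    (0 ≤ (∑ j ∈ Finset.range m, (iteratedDeriv j f a) ^ 2) +
        ∫ t in a..b,
          (iteratedDeriv m f t + ∑ j ∈ Finset.range m, w j t * iteratedDeriv j f t) ^ 2) ∧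
    (((∑ j ∈ Finset.range m, (iteratedDeriv j f a) ^ 2) +
        ∫ t in a..b,
          (iteratedDeriv m f t + ∑ j ∈ Finset.range m, w j t * iteratedDeriv j f t) ^ 2) = 0 →
      ∀ t ∈ Set.Icc a b, f t = 0) := by
  set lower : ℝ → ℝ := fun t => ∑ j ∈ Finset.range m, w j t * iteratedDeriv j f t
  have hsum_nonneg : 0 ≤ ∑ j ∈ Finset.range m, (iteratedDeriv j f a) ^ 2 :=
    Finset.sum_nonneg fun j _ => sq_nonneg _
  have hint_nonneg : 0 ≤ ∫ t in a..b, (iteratedDeriv m f t + lower t) ^ 2 :=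
    intervalIntegral.integral_nonneg hab.le fun t _ => sq_nonneg _
  refine ⟨add_nonneg hsum_nonneg hint_nonneg, fun hzero => ?_⟩
  obtain ⟨hsum0, hint0⟩ := (add_eq_zero_iff_of_nonneg hsum_nonneg hint_nonneg).1 hzero
  have hinit : ∀ j < m, iteratedDeriv j f a = 0 := fun j hj =>
    pow_eq_zero_iff two_ne_zero |>.1 <|
      (Finset.sum_eq_zero_iff_of_nonneg fun j _ => sq_nonneg _).1 hsum0 j (Finset.mem_range.2 hj)
  have hLae : (fun t => (iteratedDeriv m f t + lower t) ^ 2) =ᵐ[volume.restrict (Ioc a b)] 0 :=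
    (intervalIntegral.integral_eq_zero_iff_of_le_of_nonneg_ae hab.le
      (ae_of_all _ fun t => sq_nonneg _) hint).1 hint0
  have hlower : ContinuousOn lower (Icc a b) :=
    continuousOn_finsetSum _ fun j hj => (hw j (Finset.mem_range.1 hj)).mul
      fun t ht => (hsmooth j (Finset.mem_range.1 hj) t ht).continuousWithinAt
  obtain ⟨n, rfl⟩ := Nat.exists_eq_add_one_of_ne_zero hm.ne'
  have hL : ∀ t ∈ Icc a b, iteratedDeriv (n + 1) f t + lower t = 0 := by
    have hEq := eqOn_Icc_of_hasDerivWithinAt_of_ae_eq hab (hsmooth n n.lt_succ_self) hlower.neg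
      (hLae.mono fun t ht => eq_neg_of_add_eq_zero_left (pow_eq_zero_iff two_ne_zero |>.1 ht))
    exact fun t ht => by rw [hEq ht]; exact neg_add_cancel _
  obtain ⟨W, hW⟩ := isCompact_Icc.exists_bound_of_continuousOn
    (continuousOn_finsetSum (Finset.range (n + 1)) fun j hj => (hw j (Finset.mem_range.1 hj)).abs)
  intro t ht
  simpa using eq_zero_of_linearODE_of_initial_eq_zero (g := fun j => iteratedDeriv j f)
    (fun s hs => (le_abs_self _).trans (hW s hs)) hsmooth hL hinit 0 n.succ_pos t ht
end

section
/- Let G(t,u) = ∑_{i=1}^m u_i(t) u_i*(u) for u ≤ t and G(t,u) = 0 for u > t, where (u₁*(t),...,u_m*(t)) is the last row of W(t)^{−1}. If h ∈ L²[a,b] and r(t) = ∫_a^b G(t,u) h(u) du, then r ∈ H^m[a,b], (Lr)(t) = h(t) for almost every t, and r^{(j)}(a) = 0 for j = 0,...,m−1. -/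
/-!
With `g i = u*_i h` on `(a, b]`, the Green's integral is the variation-of-parameters expression
`r = ∑ i, u_i c_i`, `c_i t = ∫_a^t g_i`. Reading off the last row of `W⁻¹ W = 1`,
`∑ i, u_i^{(j)} u*_i` vanishes for `j < m - 1` and equals `1` for `j = m - 1`.

The first identity lets `r` be differentiated `m - 1` times at every point as if the `c_i` were
constants, although the `c_i` are merely absolutely continuous: the kernel
`∑ i, u_i^{(j)} x * g_i s` vanishes on the diagonal `x = s`, hence is `O(|x - s|) |g s|`, and the
remainder `∑ i, u_i^{(j)} x (c_i x - c_i t)` is `o(|x - t|)`. In the last step Lebesgue's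
differentiation theorem gives `c_i' = g_i` almost everywhere, which contributes
`∑ i, u_i^{(m-1)} g_i = h`, while the equation `L u_i = 0` turns `∑ i, u_i^{(m)} c_i` into
`-∑ j, w_j r^{(j)}`.
-/

open MeasureTheory Set Filter Topology Asymptotics

theorem ContDiff.hasDerivAt_iteratedDeriv {f : ℝ → ℝ} {n j : ℕ} (hf : ContDiff ℝ n f)
    (hj : j < n) (t : ℝ) : HasDerivAt (iteratedDeriv j f) (iteratedDeriv (j + 1) f t) t := by
  rw [iteratedDeriv_succ]
  exact (hf.differentiable_iteratedDeriv j (by exact_mod_cast hj) t).hasDerivAt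

theorem MeasureTheory.LocallyIntegrable.intervalIntegrable {E : Type*} [NormedAddCommGroup E]
    {f : ℝ → E} {μ : Measure ℝ} (hf : LocallyIntegrable f μ) (x y : ℝ) :
    IntervalIntegrable f μ x y :=
  (hf.integrableOn_isCompact isCompact_uIcc).intervalIntegrable

theorem integral_ite_le_eq_integral_indicator {f : ℝ → ℝ} {a b : ℝ} (hab : a ≤ b) (t : ℝ) :
    ∫ s in a..b, (if s ≤ t then f s else 0) = ∫ s in a..t, (Ioc a b).indicator f s := by
  have hlhs : ∫ s in a..b, (if s ≤ t then f s else 0) = ∫ s in Ioc a b ∩ Iic t, f s := by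
    rw [intervalIntegral.integral_of_le hab, ← setIntegral_indicator measurableSet_Iic]
    rfl
  rcases le_or_gt a t with hat | hta
  · rw [hlhs, intervalIntegral.integral_of_le hat, setIntegral_indicator measurableSet_Ioc,
      Ioc_inter_Iic, Ioc_inter_Ioc, sup_idem, inf_comm]
  · rw [hlhs, intervalIntegral.integral_of_ge hta.le, setIntegral_indicator measurableSet_Ioc,
      Ioc_inter_Iic, Ioc_inter_Ioc, Ioc_eq_empty (by simp [hta.le]),
      Ioc_eq_empty (by simp [hta.le])]
    simp

section VariationOfParameters

variable {ι : Type*} [Fintype ι]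

noncomputable def variationOfParameters (u g : ι → ℝ → ℝ) (a t : ℝ) : ℝ :=
  ∑ i, u i t * ∫ s in a..t, g i s

@[simp]
theorem variationOfParameters_self (u g : ι → ℝ → ℝ) (a : ℝ) :
    variationOfParameters u g a a = 0 := by
  simp [variationOfParameters]

theorem exists_forall_uIcc_abs_sub_le {u : ι → ℝ → ℝ} {u' : ι → ℝ} {t : ℝ}
    (hu : ∀ i, HasDerivAt (u i) (u' i) t) :
    ∃ C, 0 ≤ C ∧ ∀ᶠ x in 𝓝 t, ∀ s ∈ uIcc t x, ∀ i, |u i x - u i s| ≤ C * |x - t| := by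
  obtain ⟨C, hC0, hC⟩ :=
    ((hasDerivAt_pi (φ := fun x i => u i x)).mpr hu).hasFDerivAt.isBigO_sub.exists_pos
  obtain ⟨δ, hδ, hball⟩ := Metric.eventually_nhds_iff_ball.mp hC.bound
  have bound : ∀ i, ∀ y ∈ Metric.ball t δ, |u i y - u i t| ≤ C * |y - t| := fun i y hy =>
    (norm_le_pi_norm (fun j => u j y - u j t) i).trans (hball y hy)
  refine ⟨2 * C, by positivity, ?_⟩
  filter_upwards [Metric.ball_mem_nhds t hδ] with x hx s hs i
  have hst : |s - t| ≤ |x - t| := abs_sub_left_of_mem_uIcc hs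
  have hs' : s ∈ Metric.ball t δ := by
    rw [Metric.mem_ball, Real.dist_eq] at hx ⊢
    exact hst.trans_lt hx
  calc |u i x - u i s| ≤ |u i x - u i t| + |u i t - u i s| := abs_sub_le _ _ _
    _ ≤ C * |x - t| + C * |x - t| := by
        gcongr
        · exact bound i x hx
        · exact abs_sub_comm (u i t) (u i s) ▸ (bound i s hs').trans (by gcongr)
    _ = 2 * C * |x - t| := by ring

theorem isLittleO_sum_mul_integral {u g : ι → ℝ → ℝ} {u' : ι → ℝ} {t : ℝ}
    (hu : ∀ i, HasDerivAt (u i) (u' i) t) (hg : ∀ i, LocallyIntegrable (g i))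
    (horth : ∀ s, ∑ i, u i s * g i s = 0) :
    (fun x => ∑ i, u i x * ∫ s in t..x, g i s) =o[𝓝 t] (fun x => x - t) := by
  have hint : ∀ i x y, IntervalIntegrable (g i) volume x y := fun i => (hg i).intervalIntegrable
  have hint_abs : ∀ x y, IntervalIntegrable (fun s => ∑ i, |g i s|) volume x y := fun x y => by
    simpa only [Finset.sum_fn] using IntervalIntegrable.sum _ fun i _ => (hint i x y).abs
  set φ : ℝ → ℝ := fun x => ∫ s in t..x, ∑ i, |g i s|
  have hφ : Tendsto φ (𝓝 t) (𝓝 0) := by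
    simpa [φ] using (intervalIntegral.continuous_primitive hint_abs t).tendsto t
  obtain ⟨C, hC0, hC⟩ := exists_forall_uIcc_abs_sub_le hu
  have hbound : ∀ᶠ x in 𝓝 t,
      ‖∑ i, u i x * ∫ s in t..x, g i s‖ ≤ C * ‖(x - t) * φ x‖ := by
    filter_upwards [hC] with x hx
    have hrw : ∑ i, u i x * ∫ s in t..x, g i s = ∫ s in t..x, ∑ i, (u i x - u i s) * g i s := by
      simp_rw [sub_mul, Finset.sum_sub_distrib, horth, sub_zero]
      rw [intervalIntegral.integral_finsetSum fun i _ => (hint i t x).const_mul (u i x)]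
      simp_rw [intervalIntegral.integral_const_mul]
    have hpt : ∀ s ∈ Set.uIoc t x,
        ‖∑ i, (u i x - u i s) * g i s‖ ≤ C * |x - t| * ∑ i, |g i s| := by
      intro s hs
      rw [Finset.mul_sum]
      refine (norm_sum_le _ _).trans (Finset.sum_le_sum fun i _ => ?_)
      rw [norm_mul, Real.norm_eq_abs, Real.norm_eq_abs]
      exact mul_le_mul_of_nonneg_right (hx s (uIoc_subset_uIcc hs) i) (abs_nonneg _)
    calc ‖∑ i, u i x * ∫ s in t..x, g i s‖
        ≤ |∫ s in t..x, C * |x - t| * (∑ i, |g i s|)| := by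
          rw [hrw]
          exact intervalIntegral.norm_integral_le_abs_of_norm_le
            (ae_restrict_of_forall_mem measurableSet_uIoc hpt) ((hint_abs t x).const_mul _)
      _ = C * ‖(x - t) * φ x‖ := by
          rw [intervalIntegral.integral_const_mul, abs_mul, abs_mul, abs_of_nonneg hC0,
            norm_mul, Real.norm_eq_abs, Real.norm_eq_abs, mul_assoc, abs_abs]
  exact (IsBigO.of_bound C hbound).trans_isLittleO
    (((isBigO_refl _ _).mul_isLittleO ((isLittleO_one_iff ℝ).mpr hφ)).congr_right (by simp))

theorem hasDerivAt_variationOfParameters {u g : ι → ℝ → ℝ} {u' : ι → ℝ} {t : ℝ}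
    (hu : ∀ i, HasDerivAt (u i) (u' i) t) (hg : ∀ i, LocallyIntegrable (g i))
    (horth : ∀ s, ∑ i, u i s * g i s = 0) (a : ℝ) :
    HasDerivAt (variationOfParameters u g a) (∑ i, u' i * ∫ s in a..t, g i s) t := by
  have hint : ∀ i x y, IntervalIntegrable (g i) volume x y := fun i => (hg i).intervalIntegrable
  have hsplit : variationOfParameters u g a =
      fun x => (∑ i, u i x * ∫ s in t..x, g i s) + ∑ i, u i x * ∫ s in a..t, g i s := by
    funext x
    simp only [variationOfParameters, ← Finset.sum_add_distrib, ← mul_add]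
    refine Finset.sum_congr rfl fun i _ => ?_
    rw [add_comm, intervalIntegral.integral_add_adjacent_intervals (hint i a t) (hint i t x)]
  have hsmall : HasDerivAt (fun x => ∑ i, u i x * ∫ s in t..x, g i s) 0 t := by
    rw [hasDerivAt_iff_isLittleO]
    simpa using isLittleO_sum_mul_integral hu hg horth
  rw [hsplit]
  simpa using
    hsmall.fun_add (HasDerivAt.fun_sum fun i _ => (hu i).mul_const (∫ s in a..t, g i s))

theorem iteratedDeriv_variationOfParameters {u g : ι → ℝ → ℝ} {k : ℕ}
    (hu : ∀ i, ContDiff ℝ k (u i)) (hg : ∀ i, LocallyIntegrable (g i))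
    (horth : ∀ j < k, ∀ s, ∑ i, iteratedDeriv j (u i) s * g i s = 0) (a : ℝ) {j : ℕ}
    (hj : j ≤ k) :
    iteratedDeriv j (variationOfParameters u g a) =
      variationOfParameters (fun i => iteratedDeriv j (u i)) g a := by
  induction j with
  | zero => simp
  | succ j ih =>
    rw [iteratedDeriv_succ, ih (by omega)]
    funext t
    exact (hasDerivAt_variationOfParameters (fun i => (hu i).hasDerivAt_iteratedDeriv hj t) hg
      (horth j hj) a).deriv

theorem hasDerivAt_iteratedDeriv_variationOfParameters {u g : ι → ℝ → ℝ} {k : ℕ}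
    (hu : ∀ i, ContDiff ℝ k (u i)) (hg : ∀ i, LocallyIntegrable (g i))
    (horth : ∀ j < k, ∀ s, ∑ i, iteratedDeriv j (u i) s * g i s = 0) (a : ℝ) {j : ℕ}
    (hj : j < k) (t : ℝ) :
    HasDerivAt (iteratedDeriv j (variationOfParameters u g a))
      (iteratedDeriv (j + 1) (variationOfParameters u g a) t) t := by
  rw [iteratedDeriv_variationOfParameters hu hg horth a hj.le,
    iteratedDeriv_variationOfParameters hu hg horth a hj]
  exact hasDerivAt_variationOfParameters (fun i => (hu i).hasDerivAt_iteratedDeriv hj t) hg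
    (horth j hj) a

theorem continuous_variationOfParameters {u g : ι → ℝ → ℝ} (hu : ∀ i, Continuous (u i))
    (hg : ∀ i, LocallyIntegrable (g i)) (a : ℝ) : Continuous (variationOfParameters u g a) :=
  continuous_finsetSum _ fun i _ => (hu i).mul <| intervalIntegral.continuous_primitive
    (hg i).intervalIntegrable a

theorem ae_hasDerivAt_variationOfParameters {u u' g : ι → ℝ → ℝ}
    (hu : ∀ i t, HasDerivAt (u i) (u' i t) t) (hg : ∀ i, LocallyIntegrable (g i)) (a : ℝ) :
    ∀ᵐ t, HasDerivAt (variationOfParameters u g a)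
      (variationOfParameters u' g a t + ∑ i, u i t * g i t) t := by
  filter_upwards [ae_all_iff.mpr fun i => LocallyIntegrable.ae_hasDerivAt_integral (hg i)]
    with t ht
  have hsum := HasDerivAt.fun_sum (u := Finset.univ) fun i _ => (hu i t).mul (ht i a)
  rwa [Finset.sum_add_distrib] at hsum

theorem ae_hasDerivAt_iteratedDeriv_variationOfParameters {u g : ι → ℝ → ℝ} {k : ℕ}
    (hu : ∀ i, ContDiff ℝ (k + 1 : ℕ) (u i)) (hg : ∀ i, LocallyIntegrable (g i))
    (horth : ∀ j < k, ∀ s, ∑ i, iteratedDeriv j (u i) s * g i s = 0) (a : ℝ) :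
    ∀ᵐ t, HasDerivAt (iteratedDeriv k (variationOfParameters u g a))
      (variationOfParameters (fun i => iteratedDeriv (k + 1) (u i)) g a t +
        ∑ i, iteratedDeriv k (u i) t * g i t) t := by
  rw [iteratedDeriv_variationOfParameters (fun i => (hu i).of_le (by norm_cast; omega)) hg horth
    a le_rfl]
  exact ae_hasDerivAt_variationOfParameters
    (fun i t => (hu i).hasDerivAt_iteratedDeriv (Nat.lt_succ_self k) t) hg a

theorem variationOfParameters_add_sum_mul_eq_zero {κ : Type*} (S : Finset κ)
    {p g : ι → ℝ → ℝ} {q : κ → ι → ℝ → ℝ} {c : κ → ℝ} {a t : ℝ}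
    (hpq : ∀ i, p i t + ∑ j ∈ S, c j * q j i t = 0) :
    variationOfParameters p g a t + ∑ j ∈ S, c j * variationOfParameters (q j) g a t = 0 := by
  simp only [variationOfParameters, Finset.mul_sum]
  rw [Finset.sum_comm, ← Finset.sum_add_distrib]
  refine Finset.sum_eq_zero fun i _ => ?_
  calc p i t * (∫ s in a..t, g i s) + ∑ j ∈ S, c j * (q j i t * ∫ s in a..t, g i s)
      = (p i t + ∑ j ∈ S, c j * q j i t) * ∫ s in a..t, g i s := by
        rw [add_mul, Finset.sum_mul]
        simp only [mul_assoc]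
    _ = 0 := by rw [hpq i, zero_mul]

theorem integral_ite_le_sum_mul_eq_variationOfParameters {u v : ι → ℝ → ℝ} {h : ℝ → ℝ}
    {a b : ℝ} (hab : a ≤ b)
    (hg : ∀ i, LocallyIntegrable ((Ioc a b).indicator fun x => v i x * h x)) (t : ℝ) :
    ∫ s in a..b, (if s ≤ t then ∑ i, u i t * v i s else 0) * h s =
      variationOfParameters u (fun i => (Ioc a b).indicator fun x => v i x * h x) a t := by
  calc ∫ s in a..b, (if s ≤ t then ∑ i, u i t * v i s else 0) * h s
      = ∫ s in a..b, if s ≤ t then ∑ i, u i t * (v i s * h s) else 0 := by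
        congr 1
        funext s
        split_ifs <;> simp [Finset.sum_mul, mul_assoc]
    _ = ∫ s in a..t, ∑ i, u i t * (Ioc a b).indicator (fun x => v i x * h x) s := by
        rw [integral_ite_le_eq_integral_indicator hab]
        congr 1
        funext s
        by_cases hs : s ∈ Ioc a b <;> simp [hs]
    _ = variationOfParameters u (fun i => (Ioc a b).indicator fun x => v i x * h x) a t := by
        rw [intervalIntegral.integral_finsetSum fun i _ =>
          ((hg i).intervalIntegrable a t).const_mul _]
        simp only [intervalIntegral.integral_const_mul, variationOfParameters]

theorem sum_mul_indicator_mul {f v : ι → ℝ → ℝ} {h : ℝ → ℝ} (S : Set ℝ) (s : ℝ) :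
    ∑ i, f i s * S.indicator (fun x => v i x * h x) s =
      S.indicator (fun x => (∑ i, f i x * v i x) * h x) s := by
  by_cases hs : s ∈ S <;> simp [hs, Finset.sum_mul, mul_assoc]

end VariationOfParameters

theorem Matrix.sum_apply_mul_inv_apply {n R : Type*} [Fintype n] [DecidableEq n] [CommRing R]
    {A : Matrix n n R} (hA : IsUnit A.det) (l j : n) :
    ∑ i, A i j * A⁻¹ l i = if l = j then 1 else 0 := by
  have hentry := congr_fun (congr_fun (Matrix.nonsing_inv_mul A hA) l) j
  rw [Matrix.mul_apply, Matrix.one_apply] at hentry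
  simpa only [mul_comm] using hentry

theorem ContinuousOn.matrix_inv {X n 𝕜 : Type*} [TopologicalSpace X] [Fintype n] [DecidableEq n]
    [Field 𝕜] [TopologicalSpace 𝕜] [IsTopologicalRing 𝕜] [ContinuousInv₀ 𝕜]
    {A : X → Matrix n n 𝕜} {s : Set X} (hA : ContinuousOn A s) (hdet : ∀ x ∈ s, (A x).det ≠ 0) :
    ContinuousOn (fun x => (A x)⁻¹) s := fun x hx =>
  (continuousAt_matrix_inv _ (by
    rw [Ring.inverse_eq_inv']
    exact continuousAt_inv₀ (hdet x hx))).comp_continuousWithinAt (hA x hx)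

theorem locallyIntegrable_indicator_Ioc_mul {v h : ℝ → ℝ} {a b : ℝ}
    (hv : ContinuousOn v (Icc a b)) (hh : IntegrableOn h (Icc a b)) :
    LocallyIntegrable ((Ioc a b).indicator fun x => v x * h x) :=
  (((hh.continuousOn_mul hv isCompact_Icc).mono_set Ioc_subset_Icc_self).integrable_indicator
    measurableSet_Ioc).locallyIntegrable

noncomputable def wronskianMatrix {m : ℕ} (u : Fin m → ℝ → ℝ) (t : ℝ) : Matrix (Fin m) (Fin m) ℝ :=
  Matrix.of fun i j => iteratedDeriv j (u i) t

section Wronskian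

variable {m : ℕ} {u : Fin m → ℝ → ℝ}

theorem continuous_wronskianMatrix (hu : ∀ i, ContDiff ℝ (m - 1 : ℕ) (u i)) :
    Continuous (wronskianMatrix u) :=
  continuous_matrix fun i j => (hu i).continuous_iteratedDeriv j (by exact_mod_cast by omega)

theorem sum_iteratedDeriv_mul_wronskianMatrix_inv {t : ℝ} (hdet : (wronskianMatrix u t).det ≠ 0)
    (l : Fin m) {j : ℕ} (hj : j < m) :
    ∑ i, iteratedDeriv j (u i) t * (wronskianMatrix u t)⁻¹ l i = if (l : ℕ) = j then 1 else 0 := by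
  simpa only [wronskianMatrix, Matrix.of_apply, Fin.ext_iff] using
    Matrix.sum_apply_mul_inv_apply (isUnit_iff_ne_zero.mpr hdet) l ⟨j, hj⟩

variable {a b : ℝ} {h : ℝ → ℝ}

theorem locallyIntegrable_indicator_wronskianMatrix_inv_mul
    (hu : ∀ i, ContDiff ℝ (m - 1 : ℕ) (u i)) (hdet : ∀ t ∈ Icc a b, (wronskianMatrix u t).det ≠ 0)
    (hh : IntegrableOn h (Icc a b)) (l i : Fin m) :
    LocallyIntegrable ((Ioc a b).indicator fun t => (wronskianMatrix u t)⁻¹ l i * h t) :=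
  locallyIntegrable_indicator_Ioc_mul ((continuous_apply i).comp_continuousOn
    ((continuous_apply l).comp_continuousOn
      ((continuous_wronskianMatrix hu).continuousOn.matrix_inv hdet))) hh

theorem sum_iteratedDeriv_mul_indicator_wronskianMatrix_inv
    (hdet : ∀ t ∈ Icc a b, (wronskianMatrix u t).det ≠ 0) (l : Fin m) {j : ℕ} (hj : j < m)
    (s : ℝ) :
    ∑ i, iteratedDeriv j (u i) s *
        (Ioc a b).indicator (fun t => (wronskianMatrix u t)⁻¹ l i * h t) s =
      if (l : ℕ) = j then (Ioc a b).indicator h s else 0 := by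
  rw [sum_mul_indicator_mul]
  by_cases hs : s ∈ Ioc a b
  · rw [indicator_of_mem hs, indicator_of_mem hs,
      sum_iteratedDeriv_mul_wronskianMatrix_inv (hdet s (Ioc_subset_Icc_self hs)) l hj]
    split_ifs <;> simp
  · simp [hs]

end Wronskian

theorem greens_function_solves_ode_general
    {a b : ℝ} (hab : a < b)
    (m : ℕ) (hm : 0 < m) (u : Fin m → ℝ → ℝ)
    (hu : ∀ i, ContDiff ℝ (m : ℕ∞) (u i))
    (w : ℕ → ℝ → ℝ)
    (hL : ∀ i, ∀ t ∈ Set.Icc a b,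
      iteratedDeriv m (u i) t + ∑ j ∈ Finset.range m, w j t * iteratedDeriv j (u i) t = 0)
    (W : ℝ → Matrix (Fin m) (Fin m) ℝ)
    (hWdef : ∀ t, W t = Matrix.of fun i j : Fin m => iteratedDeriv (j : ℕ) (u i) t)
    (hW : ∀ t ∈ Set.Icc a b, (W t).det ≠ 0)
    (ustar : Fin m → ℝ → ℝ)
    (hustar : ∀ i t, ustar i t = (W t)⁻¹ ⟨m - 1, Nat.sub_lt hm Nat.one_pos⟩ i)
    (h : ℝ → ℝ) (hh : MemLp h 2 (volume.restrict (Set.Icc a b)))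
    (r : ℝ → ℝ)
    (hr : ∀ t, r t = ∫ s in a..b, (if s ≤ t then ∑ i, u i t * ustar i s else 0) * h s) :
    (∀ j < m - 1, ∀ t ∈ Set.Icc a b,
      HasDerivWithinAt (iteratedDeriv j r) (iteratedDeriv (j + 1) r t) (Set.Icc a b) t) ∧
    ContinuousOn (iteratedDeriv (m - 1) r) (Set.Icc a b) ∧
    (∀ᵐ t ∂volume, t ∈ Set.Icc a b →
      HasDerivAt (iteratedDeriv (m - 1) r)
        (h t - ∑ j ∈ Finset.range m, w j t * iteratedDeriv j r t) t) ∧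
    (∀ j < m, iteratedDeriv j r a = 0) := by
  set l : Fin m := ⟨m - 1, Nat.sub_lt hm Nat.one_pos⟩
  obtain rfl : W = wronskianMatrix u := funext hWdef
  obtain rfl : ustar = fun i t => (wronskianMatrix u t)⁻¹ l i := funext₂ hustar
  set g : Fin m → ℝ → ℝ := fun i => (Ioc a b).indicator fun t => (wronskianMatrix u t)⁻¹ l i * h t
  have hu' : ∀ i, ContDiff ℝ (m - 1 : ℕ) (u i) := fun i =>
    (hu i).of_le (Nat.cast_le.mpr (Nat.sub_le m 1))
  have hg : ∀ i, LocallyIntegrable (g i) :=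
    locallyIntegrable_indicator_wronskianMatrix_inv_mul hu' hW (hh.integrable one_le_two) l
  have hsum := fun j (hj : j < m) =>
    sum_iteratedDeriv_mul_indicator_wronskianMatrix_inv (h := h) hW l hj
  have horth : ∀ j < m - 1, ∀ s, ∑ i, iteratedDeriv j (u i) s * g i s = 0 := fun j hj s => by
    rw [hsum j (by omega), if_neg (by simp [l]; omega)]
  obtain rfl : r = variationOfParameters u g a := funext fun t =>
    (hr t).trans (integral_ite_le_sum_mul_eq_variationOfParameters hab.le hg t)
  have hderiv := fun j (hj : j ≤ m - 1) => iteratedDeriv_variationOfParameters hu' hg horth a hj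
  refine ⟨fun j hj t _ =>
      (hasDerivAt_iteratedDeriv_variationOfParameters hu' hg horth a hj t).hasDerivWithinAt,
    ?_, ?_, fun j hj => by rw [hderiv j (by omega), variationOfParameters_self]⟩
  · rw [hderiv (m - 1) le_rfl]
    exact (continuous_variationOfParameters
      (fun i => (hu' i).continuous_iteratedDeriv _ le_rfl) hg a).continuousOn
  · have hne : ∀ᵐ t ∂volume, t ≠ a := by simp [ae_iff, measure_singleton]
    filter_upwards [ae_hasDerivAt_iteratedDeriv_variationOfParameters
      (fun i => (hu i).of_le (Nat.cast_le.mpr (by omega))) hg horth a, hne] with t ht hta htI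
    have hode := variationOfParameters_add_sum_mul_eq_zero (Finset.range m) (g := g) (a := a)
      (hL · t htI)
    rw [Nat.sub_add_cancel hm, hsum (m - 1) (by omega), if_pos rfl,
      indicator_of_mem (show t ∈ Ioc a b from ⟨htI.1.lt_of_ne hta.symm, htI.2⟩)] at ht
    rw [Finset.sum_congr rfl fun j hj => by rw [hderiv j (by simp at hj; omega)]]
    convert ht using 1
    linarith

/-- Let `G(t,u) = ∑ i, u i t * u* i u` for `u ≤ t` and `0` otherwise, where
`(u* 1 t, ..., u* m t)` is the last row of `W(t)⁻¹`. If `h ∈ L²[a,b]` and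
`r(t) = ∫_a^b G(t,u) h(u) du`, then `r ∈ H^m[a,b]` (its derivatives up to order `m-1`
exist on `[a,b]`, the `(m-1)`-st being continuous), `(Lr)(t) = h(t)` for almost every
`t ∈ [a,b]`, and `r^{(j)}(a) = 0` for `j = 0, ..., m-1`. -/
theorem greens_function_solves_ode
    {a b : ℝ} (hab : a < b)
    (m : ℕ) (hm : 0 < m) (u : Fin m → ℝ → ℝ)
    (hu : ∀ i, ContDiff ℝ (m : ℕ∞) (u i))
    (w : ℕ → ℝ → ℝ) (hw : ∀ j < m, ContinuousOn (w j) (Set.Icc a b))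
    (hL : ∀ i, ∀ t ∈ Set.Icc a b,
      iteratedDeriv m (u i) t + ∑ j ∈ Finset.range m, w j t * iteratedDeriv j (u i) t = 0)
    (W : ℝ → Matrix (Fin m) (Fin m) ℝ)
    (hWdef : ∀ t, W t = Matrix.of fun i j : Fin m => iteratedDeriv (j : ℕ) (u i) t)
    (hW : ∀ t ∈ Set.Icc a b, (W t).det ≠ 0)
    (ustar : Fin m → ℝ → ℝ)
    (hustar : ∀ i t, ustar i t = (W t)⁻¹ ⟨m - 1, Nat.sub_lt hm Nat.one_pos⟩ i)
    (h : ℝ → ℝ) (hh : MemLp h 2 (volume.restrict (Set.Icc a b)))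
    (r : ℝ → ℝ)
    (hr : ∀ t, r t = ∫ s in a..b, (if s ≤ t then ∑ i, u i t * ustar i s else 0) * h s) :
    (∀ j < m - 1, ∀ t ∈ Set.Icc a b,
      HasDerivWithinAt (iteratedDeriv j r) (iteratedDeriv (j + 1) r t) (Set.Icc a b) t) ∧
    ContinuousOn (iteratedDeriv (m - 1) r) (Set.Icc a b) ∧
    (∀ᵐ t ∂volume, t ∈ Set.Icc a b →
      HasDerivAt (iteratedDeriv (m - 1) r)
        (h t - ∑ j ∈ Finset.range m, w j t * iteratedDeriv j r t) t) ∧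
    (∀ j < m, iteratedDeriv j r a = 0) :=
  greens_function_solves_ode_general hab m hm u hu w hL W hWdef hW ustar hustar h hh r hr
end

section
/- Let M = K + λD^{−1} with K symmetric positive semidefinite, D diagonal positive definite, λ > 0, T an n×m matrix of full column rank, and Q an n×(n−m) matrix of full column rank with Q'T = 0. If β̂ = M^{−1}(I − T(T'M^{−1}T)^{−1}T'M^{−1})Y, then T'β̂ = 0, and β̂ = Q(Q'MQ)^{−1}Q'Y; moreover α̂ = (T'M^{−1}T)^{−1}T'M^{−1}Y equals (T'T)^{−1}T'(Y − Mβ̂). -/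
/-!
Write `P = M⁻¹ (I - T (Tᵀ M⁻¹ T)⁻¹ Tᵀ M⁻¹)`, so that `β̂ = P Y`. Direct computation gives
`Tᵀ P = 0`, `P T = 0` and `P (M Q) = Q`, and the last two identities also hold for
`Q (Qᵀ M Q)⁻¹ Qᵀ`. Because `Qᵀ T = 0` and `Qᵀ M Q` is invertible, the columns of `T` and of
`M Q` together span `ℝⁿ`, so the two matrices coincide. Finally `Y - M β̂ = T α̂`, and
`(Tᵀ T)⁻¹ Tᵀ` is a left inverse of `T`.
-/

open Matrix

variable {ι κ η : Type*}

section CommRing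

variable [Fintype ι] [Fintype κ] [DecidableEq ι] [DecidableEq κ] {R : Type*} [CommRing R]
  {M : Matrix ι ι R} {T : Matrix ι κ R}

/-- `β̂ = reinschMatrix M T *ᵥ Y`. -/
noncomputable def reinschMatrix (M : Matrix ι ι R) (T : Matrix ι κ R) : Matrix ι ι R :=
  M⁻¹ * (1 - T * (Tᵀ * M⁻¹ * T)⁻¹ * Tᵀ * M⁻¹)

lemma transpose_mul_reinschMatrix (hG : IsUnit (Tᵀ * M⁻¹ * T).det) :
    Tᵀ * reinschMatrix M T = 0 := by
  have hexp : Tᵀ * reinschMatrix M T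
      = Tᵀ * M⁻¹ - (Tᵀ * M⁻¹ * T) * (Tᵀ * M⁻¹ * T)⁻¹ * (Tᵀ * M⁻¹) := by
    simp only [reinschMatrix, Matrix.mul_sub, Matrix.mul_one, Matrix.mul_assoc]
  rw [hexp, mul_nonsing_inv _ hG, Matrix.one_mul, sub_self]

lemma reinschMatrix_mul_eq_zero (hG : IsUnit (Tᵀ * M⁻¹ * T).det) :
    reinschMatrix M T * T = 0 := by
  have hexp : reinschMatrix M T * T
      = M⁻¹ * T - M⁻¹ * T * ((Tᵀ * M⁻¹ * T)⁻¹ * (Tᵀ * M⁻¹ * T)) := by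
    simp only [reinschMatrix, Matrix.mul_sub, Matrix.sub_mul, Matrix.mul_one, Matrix.mul_assoc]
  rw [hexp, nonsing_inv_mul _ hG, Matrix.mul_one, sub_self]

lemma reinschMatrix_mul_mul_eq {Q : Matrix ι η R} (hM : IsUnit M.det) (hTQ : Tᵀ * Q = 0) :
    reinschMatrix M T * (M * Q) = Q := by
  have hexp : reinschMatrix M T * (M * Q)
      = M⁻¹ * M * Q - M⁻¹ * T * (Tᵀ * M⁻¹ * T)⁻¹ * (Tᵀ * (M⁻¹ * M * Q)) := by
    simp only [reinschMatrix, Matrix.mul_sub, Matrix.sub_mul, Matrix.mul_one, Matrix.mul_assoc]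
  rw [hexp, nonsing_inv_mul _ hM, Matrix.one_mul, hTQ, Matrix.mul_zero, sub_zero]

lemma one_sub_mul_reinschMatrix (hM : IsUnit M.det) :
    1 - M * reinschMatrix M T = T * (Tᵀ * M⁻¹ * T)⁻¹ * Tᵀ * M⁻¹ := by
  rw [reinschMatrix, ← Matrix.mul_assoc, mul_nonsing_inv _ hM, Matrix.one_mul, sub_sub_cancel]

end CommRing

lemma projection_mul_mul_eq [Fintype ι] [Fintype η] [DecidableEq η] {R : Type*} [CommRing R]
    {M : Matrix ι ι R} {Q : Matrix ι η R} (hQMQ : IsUnit (Qᵀ * M * Q).det) :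
    Q * (Qᵀ * M * Q)⁻¹ * Qᵀ * (M * Q) = Q := by
  have hexp : Q * (Qᵀ * M * Q)⁻¹ * Qᵀ * (M * Q) = Q * ((Qᵀ * M * Q)⁻¹ * (Qᵀ * M * Q)) := by
    simp only [Matrix.mul_assoc]
  rw [hexp, nonsing_inv_mul _ hQMQ, Matrix.mul_one]

section Field

variable [Fintype κ] {K : Type*} [Field K]

lemma Matrix.mulVec_injective_of_rank_eq {A : Matrix ι κ K} (hA : A.rank = Fintype.card κ) :
    Function.Injective A.mulVec := by
  rw [mulVec_injective_iff, linearIndependent_iff_card_eq_finrank_span, ← hA,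
    rank_eq_finrank_span_cols, Set.finrank]

variable [Fintype ι] [Fintype η] [DecidableEq η] {M : Matrix ι ι K} {T : Matrix ι κ K}
  {Q : Matrix ι η K}

lemma exists_mulVec_add_mul_mulVec_eq (hT : Function.Injective T.mulVec)
    (hQMQ : IsUnit (Qᵀ * M * Q).det) (hQT : Qᵀ * T = 0)
    (hcard : Fintype.card κ + Fintype.card η = Fintype.card ι) (Y : ι → K) :
    ∃ a b, T *ᵥ a + (M * Q) *ᵥ b = Y := by
  let f : ((κ → K) × (η → K)) →ₗ[K] (ι → K) := T.mulVecLin.coprod (M * Q).mulVecLin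
  have hf : Function.Injective f := by
    rw [← LinearMap.ker_eq_bot, Submodule.eq_bot_iff]
    rintro ⟨a, b⟩ hab
    have hab' : T *ᵥ a + (M * Q) *ᵥ b = 0 := hab
    have hb : b = 0 := by
      apply mulVec_injective_iff_isUnit.mpr ((isUnit_iff_isUnit_det _).mpr hQMQ)
      simpa [mulVec_add, mulVec_mulVec, hQT, Matrix.mul_assoc] using congrArg (Qᵀ *ᵥ ·) hab'
    have ha : a = 0 := hT (by simpa [hb] using hab')
    simp [ha, hb]
  have hdim : Module.finrank K ((κ → K) × (η → K)) = Module.finrank K (ι → K) := by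
    simp [Module.finrank_prod, hcard]
  obtain ⟨⟨a, b⟩, hab⟩ := (LinearMap.injective_iff_surjective_of_finrank_eq_finrank hdim).mp hf Y
  exact ⟨a, b, hab⟩

lemma reinschMatrix_eq [DecidableEq ι] [DecidableEq κ] (hM : IsUnit M.det)
    (hG : IsUnit (Tᵀ * M⁻¹ * T).det) (hQMQ : IsUnit (Qᵀ * M * Q).det)
    (hT : Function.Injective T.mulVec) (hQT : Qᵀ * T = 0)
    (hcard : Fintype.card κ + Fintype.card η = Fintype.card ι) :
    reinschMatrix M T = Q * (Qᵀ * M * Q)⁻¹ * Qᵀ := by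
  have hTQ : Tᵀ * Q = 0 := by simpa using congrArg transpose hQT
  have hRT : Q * (Qᵀ * M * Q)⁻¹ * Qᵀ * T = 0 := by rw [Matrix.mul_assoc, hQT, Matrix.mul_zero]
  refine Matrix.mulVec_injective (funext fun Y => ?_)
  obtain ⟨a, b, rfl⟩ := exists_mulVec_add_mul_mulVec_eq hT hQMQ hQT hcard Y
  simp only [mulVec_add, mulVec_mulVec, reinschMatrix_mul_eq_zero hG,
    reinschMatrix_mul_mul_eq hM hTQ, hRT, projection_mul_mul_eq hQMQ]

end Field

lemma Matrix.PosDef.isUnit_det_transpose_mul_mul [Fintype ι] [Fintype κ] [DecidableEq ι]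
    [DecidableEq κ] {A : Matrix ι ι ℝ} (hA : A.PosDef) {B : Matrix ι κ ℝ}
    (hB : Function.Injective B.mulVec) : IsUnit (Bᵀ * A * B).det :=
  (isUnit_iff_isUnit_det _).mp (by simpa using (hA.conjTranspose_mul_mul_same hB).isUnit)

theorem reinsch_algorithm_identities_general
    {n m : ℕ}
    (K D : Matrix (Fin n) (Fin n) ℝ) (hK : K.PosSemidef)
    (hD : D.PosDef)
    (lam : ℝ) (hlam : 0 < lam)
    (T : Matrix (Fin n) (Fin m) ℝ) (hT : T.rank = m)
    (Q : Matrix (Fin n) (Fin (n - m)) ℝ) (hQ : Q.rank = n - m) (hQT : Qᵀ * T = 0)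
    (Y : Fin n → ℝ)
    (M : Matrix (Fin n) (Fin n) ℝ) (hM : M = K + lam • D⁻¹)
    (β : Fin n → ℝ)
    (hβ : β = (M⁻¹ * (1 - T * (Tᵀ * M⁻¹ * T)⁻¹ * Tᵀ * M⁻¹)).mulVec Y) :
    Tᵀ.mulVec β = 0 ∧
    β = (Q * (Qᵀ * M * Q)⁻¹ * Qᵀ).mulVec Y ∧
    ((Tᵀ * M⁻¹ * T)⁻¹ * Tᵀ * M⁻¹).mulVec Y
      = ((Tᵀ * T)⁻¹ * Tᵀ).mulVec (Y - M.mulVec β) := by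
  replace hβ : β = reinschMatrix M T *ᵥ Y := hβ
  have hMpd : M.PosDef := hM ▸ PosDef.posSemidef_add hK (hD.inv.smul hlam)
  have hMu : IsUnit M.det := (isUnit_iff_isUnit_det _).mp hMpd.isUnit
  have hTinj : Function.Injective T.mulVec := mulVec_injective_of_rank_eq (by simpa using hT)
  have hG := hMpd.inv.isUnit_det_transpose_mul_mul hTinj
  have hQinj : Function.Injective Q.mulVec := mulVec_injective_of_rank_eq (by simpa using hQ)
  have hQMQ := hMpd.isUnit_det_transpose_mul_mul hQinj
  have hTT : IsUnit (Tᵀ * T).det := by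
    simpa using PosDef.one.isUnit_det_transpose_mul_mul hTinj
  have hcard : Fintype.card (Fin m) + Fintype.card (Fin (n - m)) = Fintype.card (Fin n) := by
    have := T.rank_le_card_height
    simp only [Fintype.card_fin] at this ⊢
    omega
  refine ⟨?_, ?_, ?_⟩
  · rw [hβ, mulVec_mulVec, transpose_mul_reinschMatrix hG, zero_mulVec]
  · rw [hβ, reinschMatrix_eq hMu hG hQMQ hTinj hQT hcard]
  · have hres : Y - M *ᵥ β = (T * (Tᵀ * M⁻¹ * T)⁻¹ * Tᵀ * M⁻¹) *ᵥ Y := by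
      rw [hβ, mulVec_mulVec, ← one_sub_mul_reinschMatrix hMu, sub_mulVec, one_mulVec]
    rw [hres, mulVec_mulVec]
    simp only [← Matrix.mul_assoc]
    rw [Matrix.mul_assoc _ Tᵀ T, nonsing_inv_mul _ hTT, Matrix.one_mul]

/-- Let `M = K + λ D⁻¹` with `K` symmetric positive semidefinite, `D` diagonal
positive definite, `λ > 0`, `T` an `n × m` matrix of full column rank and `Q` an
`n × (n-m)` matrix of full column rank with `Qᵀ T = 0` (so the columns of `Q` span the
orthogonal complement of the column space of `T`). If
`β̂ = M⁻¹ (I - T (Tᵀ M⁻¹ T)⁻¹ Tᵀ M⁻¹) Y`, then `Tᵀ β̂ = 0` and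
`β̂ = Q (Qᵀ M Q)⁻¹ Qᵀ Y`; moreover `α̂ = (Tᵀ M⁻¹ T)⁻¹ Tᵀ M⁻¹ Y` equals
`(Tᵀ T)⁻¹ Tᵀ (Y - M β̂)`. -/
theorem reinsch_algorithm_identities
    {n m : ℕ} (hm : 1 ≤ m) (hmn : m < n)
    (K D : Matrix (Fin n) (Fin n) ℝ) (hK : K.PosSemidef) (hDdiag : D.IsDiag)
    (hD : D.PosDef)
    (lam : ℝ) (hlam : 0 < lam)
    (T : Matrix (Fin n) (Fin m) ℝ) (hT : T.rank = m)
    (Q : Matrix (Fin n) (Fin (n - m)) ℝ) (hQ : Q.rank = n - m) (hQT : Qᵀ * T = 0)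
    (Y : Fin n → ℝ)
    (M : Matrix (Fin n) (Fin n) ℝ) (hM : M = K + lam • D⁻¹)
    (β : Fin n → ℝ)
    (hβ : β = (M⁻¹ * (1 - T * (Tᵀ * M⁻¹ * T)⁻¹ * Tᵀ * M⁻¹)).mulVec Y) :
    Tᵀ.mulVec β = 0 ∧
    β = (Q * (Qᵀ * M * Q)⁻¹ * Qᵀ).mulVec Y ∧
    ((Tᵀ * M⁻¹ * T)⁻¹ * Tᵀ * M⁻¹).mulVec Y
      = ((Tᵀ * T)⁻¹ * Tᵀ).mulVec (Y - M.mulVec β) :=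
  reinsch_algorithm_identities_general K D hK hD lam hlam T hT Q hQ hQT Y M hM β hβ
end
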